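/- arXiv:2604.22798 — 2 statements merged into one kernel-verified Lean document; each statement's English description precedes it below -/
import Mathlib

section
/- Let ν > -1 be real. Then every zero of f_ν is simple: if w₀ ∈ ℂ and f_ν(w₀) = 0, then f_ν'(w₀) ≠ 0. (Equivalently, every positive zero j of the Bessel function J_ν satisfies J_ν'(j) ≠ 0.) -/
/-- The entire function `f_ν(w) = Σ_{m=0}^∞ w^m / (m! · Γ(m+ν+1))`,
where `Γ` is the complex Gamma function. -/
noncomputable def besselF (ν : ℝ) (w : ℂ) : ℂ :=
  ∑' m : ℕ, w ^ m / ((m.factorial : ℂ) * Complex.Gamma ((m : ℂ) + (ν : ℂ) + 1))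

/-!
Write `f_ν(w) = Σ a_ν(m) wᵐ`. Termwise differentiation and `(m + 1) a_ν(m + 1) = a_{ν+1}(m)` give
`f_ν' = f_{ν+1}`, and `a_ν(m) = (m + ν + 1) a_{ν+1}(m)` gives the recurrence
`f_ν(w) = (ν + 1) f_{ν+1}(w) + w f_{ν+2}(w)`. If `f_ν(w₀) = f_ν'(w₀) = 0`, then `w₀ ≠ 0` because
`f_ν(0) = 1 / Γ(ν + 1) ≠ 0`, so the recurrence forces `f_{ν+n}(w₀) = 0` for every `n`: all
derivatives of the entire function `f_ν` vanish at `w₀`. Its Taylor expansion at `w₀` then gives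
`f_ν(0) = 0`, a contradiction.
-/

open Complex Filter FormalMultilinearSeries

section EntireSeries

variable {𝕜 : Type*} [NontriviallyNormedField 𝕜] [CompleteSpace 𝕜] {c : ℕ → 𝕜}

theorem hasFPowerSeriesOnBall_ofScalarsSum (hc : (ofScalars 𝕜 c).radius = ⊤) :
    HasFPowerSeriesOnBall (ofScalarsSum c) (ofScalars 𝕜 c) 0 ⊤ :=
  hc ▸ (ofScalars 𝕜 c).hasFPowerSeriesOnBall (by simp [hc])

theorem hasSum_ofScalarsSum (hc : (ofScalars 𝕜 c).radius = ⊤) (w : 𝕜) :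
    HasSum (fun n ↦ c n * w ^ n) (ofScalarsSum c w) := by
  simpa [ofScalars_apply_eq, mul_comm] using
    (hasFPowerSeriesOnBall_ofScalarsSum hc).hasSum (y := w) (by simp)

theorem differentiable_ofScalarsSum (hc : (ofScalars 𝕜 c).radius = ⊤) :
    Differentiable 𝕜 (ofScalarsSum (E := 𝕜) c) := by
  rw [← differentiableOn_univ, ← Metric.eball_top 0]
  exact (hasFPowerSeriesOnBall_ofScalarsSum hc).differentiableOn

/-- Differentiating in the direction `w` itself puts the derivative series on the diagonal, where
`derivSeries_apply_diag` evaluates it; this costs the factor `w`. -/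
theorem hasSum_mul_deriv_ofScalarsSum_succ (hc : (ofScalars 𝕜 c).radius = ⊤) (w : 𝕜) :
    HasSum (fun n ↦ (n + 1) * c (n + 1) * w ^ (n + 1)) (w * deriv (ofScalarsSum c) w) := by
  have h := ((hasFPowerSeriesOnBall_ofScalarsSum hc).fderiv.hasSum (y := w) (by simp)).mapL
    (ContinuousLinearMap.apply 𝕜 𝕜 w)
  have hdiag : fderiv 𝕜 (ofScalarsSum c) w w = w * deriv (ofScalarsSum c) w := by
    rw [← fderiv_apply_one_eq_deriv, ← smul_eq_mul, ← map_smul, smul_eq_mul, mul_one]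
  rw [zero_add, ContinuousLinearMap.apply_apply, hdiag] at h
  refine h.congr_fun fun n ↦ ?_
  rw [ContinuousLinearMap.apply_apply, derivSeries_apply_diag, ofScalars_apply_eq, nsmul_eq_mul,
    smul_eq_mul]
  push_cast
  ring

theorem hasSum_deriv_ofScalarsSum (hc : (ofScalars 𝕜 c).radius = ⊤) (w : 𝕜) :
    HasSum (fun n ↦ (n + 1) * c (n + 1) * w ^ n) (deriv (ofScalarsSum c) w) := by
  rcases eq_or_ne w 0 with rfl | hw
  · rw [(hasFPowerSeriesOnBall_ofScalarsSum hc).hasFPowerSeriesAt.deriv]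
    convert hasSum_single (f := fun n : ℕ ↦ (n + 1) * c (n + 1) * (0 : 𝕜) ^ n) 0
      (fun n hn ↦ by simp [hn]) using 1
    simp
  · rw [← inv_mul_cancel_left₀ hw (deriv _ w)]
    refine ((hasSum_mul_deriv_ofScalarsSum_succ hc w).mul_left w⁻¹).congr_fun fun n ↦ ?_
    rw [pow_succ]
    field_simp

theorem hasSum_mul_deriv_ofScalarsSum (hc : (ofScalars 𝕜 c).radius = ⊤) (w : 𝕜) :
    HasSum (fun n ↦ n * c n * w ^ n) (w * deriv (ofScalarsSum c) w) := by
  rw [← hasSum_nat_add_iff' 1]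
  simpa using hasSum_mul_deriv_ofScalarsSum_succ hc w

end EntireSeries

noncomputable def besselCoeff (ν : ℝ) (m : ℕ) : ℂ :=
  ((m.factorial : ℂ) * Gamma ((m : ℂ) + ν + 1))⁻¹

theorem besselF_eq_ofScalarsSum (ν : ℝ) : besselF ν = ofScalarsSum (besselCoeff ν) := by
  ext w
  rw [ofScalars_sum_eq, besselF]
  exact tsum_congr fun m ↦ by rw [besselCoeff, smul_eq_mul, div_eq_inv_mul]

theorem succ_mul_besselCoeff_succ (ν : ℝ) (m : ℕ) :
    ((m : ℂ) + 1) * besselCoeff ν (m + 1) = besselCoeff (ν + 1) m := by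
  have hm : (m : ℂ) + 1 ≠ 0 := by exact_mod_cast m.succ_ne_zero
  rw [besselCoeff, besselCoeff, Nat.factorial_succ]
  push_cast
  rw [mul_assoc, mul_inv, mul_inv_cancel_left₀ hm]
  ring_nf

section BesselF

variable {ν : ℝ} (hν : -1 < ν)
include hν

theorem re_natCast_add_ofReal_add_one_pos (m : ℕ) : 0 < ((m : ℂ) + ν + 1).re := by
  simp only [add_re, natCast_re, ofReal_re, one_re]
  linarith [(m.cast_nonneg : (0 : ℝ) ≤ m)]

theorem natCast_add_ofReal_add_one_ne_zero (m : ℕ) : (m : ℂ) + ν + 1 ≠ 0 := fun h ↦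
  (re_natCast_add_ofReal_add_one_pos hν m).ne' (by rw [h, zero_re])

theorem besselCoeff_ne_zero (m : ℕ) : besselCoeff ν m ≠ 0 :=
  inv_ne_zero <| mul_ne_zero (Nat.cast_ne_zero.2 m.factorial_ne_zero)
    (Gamma_ne_zero_of_re_pos (re_natCast_add_ofReal_add_one_pos hν m))

theorem besselCoeff_eq_mul_besselCoeff_add_one (m : ℕ) :
    besselCoeff ν m = ((m : ℂ) + ν + 1) * besselCoeff (ν + 1) m := by
  have hΓ : Gamma ((m : ℂ) + ↑(ν + 1) + 1) = ((m : ℂ) + ν + 1) * Gamma ((m : ℂ) + ν + 1) := by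
    rw [← Gamma_add_one _ (natCast_add_ofReal_add_one_ne_zero hν m)]
    push_cast; ring_nf
  rw [besselCoeff, besselCoeff, hΓ, mul_left_comm, mul_inv ((m : ℂ) + ν + 1),
    mul_inv_cancel_left₀ (natCast_add_ofReal_add_one_ne_zero hν m)]


theorem besselCoeff_succ (m : ℕ) :
    besselCoeff ν (m + 1) = (((m : ℂ) + 1) * ((m : ℂ) + ν + 1))⁻¹ * besselCoeff ν m := by
  have hm : (m : ℂ) + 1 ≠ 0 := by exact_mod_cast m.succ_ne_zero
  rw [besselCoeff_eq_mul_besselCoeff_add_one hν m, ← succ_mul_besselCoeff_succ, mul_inv,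
    mul_assoc, inv_mul_cancel_left₀ (natCast_add_ofReal_add_one_ne_zero hν m),
    inv_mul_cancel_left₀ hm]

theorem radius_ofScalars_besselCoeff :
    (ofScalars ℂ (besselCoeff ν)).radius = ⊤ := by
  refine ofScalars_radius_eq_top_of_tendsto _ _ (.of_forall (besselCoeff_ne_zero hν)) ?_
  have hratio (m : ℕ) :
      ‖besselCoeff ν m.succ‖ / ‖besselCoeff ν m‖ = (((m : ℝ) + 1) * (m + ν + 1))⁻¹ := by
    have hpos : 0 < ((m : ℝ) + 1) * (m + ν + 1) := by
      have := re_natCast_add_ofReal_add_one_pos hν m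
      simp only [add_re, natCast_re, ofReal_re, one_re] at this
      positivity
    rw [besselCoeff_succ hν, norm_mul,
      mul_div_cancel_right₀ _ (norm_ne_zero_iff.2 (besselCoeff_ne_zero hν m)),
      ← abs_of_pos (inv_pos.2 hpos), ← Real.norm_eq_abs, ← norm_real]
    push_cast
    rfl
  simp_rw [hratio]
  have hlin (a : ℝ) : Tendsto (fun m : ℕ ↦ (m : ℝ) + a) atTop atTop :=
    tendsto_atTop_add_const_right _ a tendsto_natCast_atTop_atTop
  exact tendsto_inv_atTop_zero.comp
    ((hlin 1).atTop_mul_atTop₀ (by simpa only [add_assoc] using hlin (ν + 1)))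

theorem hasSum_besselF (w : ℂ) : HasSum (fun m ↦ besselCoeff ν m * w ^ m) (besselF ν w) :=
  besselF_eq_ofScalarsSum ν ▸ hasSum_ofScalarsSum (radius_ofScalars_besselCoeff hν) w

theorem differentiable_besselF : Differentiable ℂ (besselF ν) :=
  besselF_eq_ofScalarsSum ν ▸ differentiable_ofScalarsSum (radius_ofScalars_besselCoeff hν)

theorem besselF_zero_ne_zero : besselF ν 0 ≠ 0 := by
  simpa [besselF_eq_ofScalarsSum] using besselCoeff_ne_zero hν 0

theorem deriv_besselF : deriv (besselF ν) = besselF (ν + 1) := by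
  ext w
  rw [besselF_eq_ofScalarsSum]
  exact (hasSum_deriv_ofScalarsSum (radius_ofScalars_besselCoeff hν) w).unique
    ((hasSum_besselF (by linarith) w).congr_fun fun m ↦ by rw [succ_mul_besselCoeff_succ])

theorem besselF_eq_add_mul_besselF_add_two (w : ℂ) :
    besselF ν w = (ν + 1) * besselF (ν + 1) w + w * besselF (ν + 2) w := by
  have hν₁ : -1 < ν + 1 := by linarith
  have h := ((hasSum_besselF hν₁ w).mul_left ((ν : ℂ) + 1)).add
    (hasSum_mul_deriv_ofScalarsSum (radius_ofScalars_besselCoeff hν₁) w)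
  rw [← besselF_eq_ofScalarsSum, deriv_besselF hν₁, add_assoc, one_add_one_eq_two] at h
  refine (hasSum_besselF hν w).unique (h.congr_fun fun m ↦ ?_)
  rw [besselCoeff_eq_mul_besselCoeff_add_one hν]
  ring

theorem besselF_add_two_eq_zero {w : ℂ} (hw : w ≠ 0) (h₀ : besselF ν w = 0)
    (h₁ : besselF (ν + 1) w = 0) : besselF (ν + 2) w = 0 := by
  simpa [hw, h₀, h₁] using besselF_eq_add_mul_besselF_add_two hν w

theorem besselF_add_natCast_eq_zero {w : ℂ} (hw : w ≠ 0) (h₀ : besselF ν w = 0)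
    (h₁ : besselF (ν + 1) w = 0) (n : ℕ) : besselF (ν + n) w = 0 := by
  induction n using Nat.twoStepInduction with
  | zero => simpa using h₀
  | one => simpa using h₁
  | more n ih₀ ih₁ =>
    have := besselF_add_two_eq_zero (by linarith [(n.cast_nonneg : (0 : ℝ) ≤ n)]) hw ih₀
      (by simpa [add_assoc] using ih₁)
    simpa [add_assoc, one_add_one_eq_two] using this

theorem iteratedDeriv_besselF (n : ℕ) : iteratedDeriv n (besselF ν) = besselF (ν + n) := by
  induction n with
  | zero => simp
  | succ n ih =>
    rw [iteratedDeriv_succ, ih, deriv_besselF (by linarith [(n.cast_nonneg : (0 : ℝ) ≤ n)]),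
      Nat.cast_succ, add_assoc]

end BesselF

/-- Let `ν > -1`. Every zero of `f_ν` is simple: if `f_ν(w₀) = 0` then
`f_ν'(w₀) ≠ 0`. -/
theorem stmt6 (ν : ℝ) (hν : -1 < ν) :
    ∀ w₀ : ℂ, besselF ν w₀ = 0 → deriv (besselF ν) w₀ ≠ 0 := by
  intro w₀ h₀ h₁
  rw [deriv_besselF hν] at h₁
  have hw₀ : w₀ ≠ 0 := by
    rintro rfl
    exact besselF_zero_ne_zero hν h₀
  apply besselF_zero_ne_zero hν
  rw [← taylorSeries_eq_of_entire' w₀ 0 (differentiable_besselF hν)]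
  simp [iteratedDeriv_besselF hν, besselF_add_natCast_eq_zero hν hw₀ h₀ h₁]
end

section
/- Let ν > -1 be real, τ > 0, R₀ > 0, R_∞ > 0. Define for real s > 0 the Bessel impedance Z_B(s) = R_∞ · I_ν(√(sτ)) / I_{ν+2}(√(sτ)) and the parallel impedance Z(s) = R₀ · Z_B(s) / (R₀ + Z_B(s)). Then Z(s) → R₀ as s → 0⁺ along the positive reals, and Z(s) → R₀ R_∞ / (R₀ + R_∞) as s → +∞ along the positive reals. -/
/-- The modified Bessel function of the first kind,
`I_ν(z) = (z/2)^ν · f_ν(z²/4)`, with the principal branch of the power. -/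
noncomputable def besselI (ν : ℝ) (z : ℂ) : ℂ :=
  (z / 2) ^ (ν : ℂ) * besselF ν (z ^ 2 / 4)

/-! For `x > 0` and `w = x²/4`, the quotient `I_ν(x)/I_{ν+2}(x)` is the real quotient
`G_ν(w)/(w G_{ν+2}(w))` of the series `G_μ(w) = Σ t_{μ,m}(w)`, `t_{μ,m}(w) = w^m/(m! Γ(m+μ+1))`.
As `w → 0⁺` the numerator stays above `1/Γ(ν+1)` while the denominator is `O(w)`, so `Z_B → ∞`
and `Z → R₀`. As `w → ∞`, the identity `G_ν − w G_{ν+2} = Σ (ν+1)/(m+ν+1) t_{ν,m}` averages a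
null sequence against weights whose mass escapes to infinity (`t_{ν,m}/t_{ν,m+1} = O(1/w)`), so
`w G_{ν+2}/G_ν → 1`, `Z_B → R_∞` and `Z → R₀R_∞/(R₀+R_∞)`. -/

open Filter Topology

noncomputable def besselTerm (μ w : ℝ) (m : ℕ) : ℝ :=
  w ^ m / ((m.factorial : ℝ) * Real.Gamma ((m : ℝ) + μ + 1))

noncomputable def besselSeries (μ w : ℝ) : ℝ := ∑' m, besselTerm μ w m

noncomputable def besselRatio (ν w : ℝ) : ℝ := besselSeries ν w / (w * besselSeries (ν + 2) w)

lemma natCast_add_add_one_pos {μ : ℝ} (hμ : -1 < μ) (m : ℕ) : 0 < (m : ℝ) + μ + 1 := by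
  linarith [m.cast_nonneg (α := ℝ)]

lemma besselTerm_nonneg {μ w : ℝ} (hμ : -1 < μ) (hw : 0 ≤ w) (m : ℕ) : 0 ≤ besselTerm μ w m := by
  have := Real.Gamma_pos_of_pos (natCast_add_add_one_pos hμ m)
  unfold besselTerm
  positivity

lemma besselTerm_zero (μ w : ℝ) : besselTerm μ w 0 = (Real.Gamma (μ + 1))⁻¹ := by
  simp [besselTerm]

lemma besselTerm_succ {μ : ℝ} (hμ : -1 < μ) (w : ℝ) (m : ℕ) :
    besselTerm μ w (m + 1) = w * besselTerm μ w m / ((m + 1) * (m + μ + 1)) := by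
  have hpos := natCast_add_add_one_pos hμ m
  have := Real.Gamma_pos_of_pos hpos
  rw [besselTerm, besselTerm, Nat.factorial_succ, Nat.cast_succ,
    show (m : ℝ) + 1 + μ + 1 = (m + μ + 1) + 1 by ring, Real.Gamma_add_one hpos.ne']
  push_cast
  field_simp
  ring

lemma mul_besselTerm_add_two {μ : ℝ} (hμ : -1 < μ) (w : ℝ) (m : ℕ) :
    w * besselTerm (μ + 2) w m = (m + 1) / (m + 1 + μ + 1) * besselTerm μ w (m + 1) := by
  have hpos : (0 : ℝ) < m + 1 + μ + 1 := by linarith [natCast_add_add_one_pos hμ m]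
  have := Real.Gamma_pos_of_pos hpos
  rw [besselTerm, besselTerm, Nat.factorial_succ, Nat.cast_succ,
    show (m : ℝ) + (μ + 2) + 1 = (m + 1 + μ + 1) + 1 by ring, Real.Gamma_add_one hpos.ne']
  push_cast
  field_simp
  ring

lemma summable_besselTerm (μ w : ℝ) : Summable (besselTerm μ w) := by
  refine .of_norm_bounded_eventually_nat (Real.summable_pow_div_factorial |w|) ?_
  obtain ⟨N, hN⟩ := exists_nat_ge (1 - μ)
  filter_upwards [eventually_ge_atTop N] with m hm
  have h2 : (2 : ℝ) ≤ m + μ + 1 := by linarith [(Nat.cast_le (α := ℝ)).2 hm]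
  have hΓ : 1 ≤ Real.Gamma (m + μ + 1) := by
    simpa [Real.Gamma_two] using
      Real.Gamma_strictMonoOn_Ici.monotoneOn Set.self_mem_Ici h2 h2
  rw [besselTerm, norm_div, norm_mul, Real.norm_eq_abs, abs_pow,
    Real.norm_of_nonneg (by positivity), Real.norm_of_nonneg (by linarith)]
  gcongr
  exact le_mul_of_one_le_right (by positivity) hΓ

lemma besselTerm_le_besselSeries {μ w : ℝ} (hμ : -1 < μ) (hw : 0 ≤ w) (m : ℕ) :
    besselTerm μ w m ≤ besselSeries μ w :=
  (summable_besselTerm μ w).le_tsum m fun k _ ↦ besselTerm_nonneg hμ hw k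

lemma besselSeries_pos {μ w : ℝ} (hμ : -1 < μ) (hw : 0 ≤ w) : 0 < besselSeries μ w := by
  refine lt_of_lt_of_le ?_ (besselTerm_le_besselSeries hμ hw 0)
  rw [besselTerm_zero]
  exact inv_pos.2 (Real.Gamma_pos_of_pos (by linarith))

lemma besselSeries_le_besselSeries {μ w w' : ℝ} (hμ : -1 < μ) (hw : 0 ≤ w) (hww' : w ≤ w') :
    besselSeries μ w ≤ besselSeries μ w' := by
  refine (summable_besselTerm μ w).tsum_le_tsum (fun m ↦ ?_) (summable_besselTerm μ w')
  have := Real.Gamma_pos_of_pos (natCast_add_add_one_pos hμ m)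
  unfold besselTerm
  gcongr

lemma besselSeries_sub_mul_besselSeries_add_two {μ : ℝ} (hμ : -1 < μ) {w : ℝ} (hw : 0 ≤ w) :
    besselSeries μ w - w * besselSeries (μ + 2) w =
      ∑' m : ℕ, (μ + 1) / (m + μ + 1) * besselTerm μ w m := by
  set c : ℕ → ℝ := fun m ↦ (μ + 1) / (m + μ + 1)
  have hc : ∀ m, 0 ≤ c m ∧ c m ≤ 1 := fun m ↦ by
    have := natCast_add_add_one_pos hμ m
    exact ⟨div_nonneg (by linarith) this.le,
      (div_le_one this).2 (by linarith [m.cast_nonneg (α := ℝ)])⟩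
  have hct : Summable fun m ↦ c m * besselTerm μ w m :=
    (summable_besselTerm μ w).of_nonneg_of_le
      (fun m ↦ mul_nonneg (hc m).1 (besselTerm_nonneg hμ hw m))
      (fun m ↦ mul_le_of_le_one_left (besselTerm_nonneg hμ hw m) (hc m).2)
  have hterm : ∀ m : ℕ, w * besselTerm (μ + 2) w m =
      besselTerm μ w (m + 1) - c (m + 1) * besselTerm μ w (m + 1) := fun m ↦ by
    have := natCast_add_add_one_pos hμ (m + 1)
    push_cast at this
    rw [mul_besselTerm_add_two hμ, ← one_sub_mul]
    congr 1
    simp only [c]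
    push_cast
    field_simp
    ring
  have hc0 : c 0 = 1 := by
    simp only [c, Nat.cast_zero, zero_add]
    exact div_self (by linarith : (0 : ℝ) < μ + 1).ne'
  rw [besselSeries, besselSeries, ← tsum_mul_left, tsum_congr hterm,
    (summable_besselTerm μ w).tsum_eq_zero_add, hct.tsum_eq_zero_add,
    ((summable_nat_add_iff 1).2 (summable_besselTerm μ w)).tsum_sub
      ((summable_nat_add_iff 1).2 hct), hc0]
  ring

lemma tendsto_besselTerm_div_besselSeries_atTop {μ : ℝ} (hμ : -1 < μ) (m : ℕ) :
    Tendsto (fun w ↦ besselTerm μ w m / besselSeries μ w) atTop (𝓝 0) := by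
  refine tendsto_of_tendsto_of_tendsto_of_le_of_le' tendsto_const_nhds
    (tendsto_const_nhds.div_atTop tendsto_id :
      Tendsto (fun w : ℝ ↦ (m + 1) * (m + μ + 1) / w) atTop (𝓝 0)) ?_ ?_
  · filter_upwards [eventually_ge_atTop 0] with w hw
    exact div_nonneg (besselTerm_nonneg hμ hw m) (besselSeries_pos hμ hw).le
  · filter_upwards [eventually_gt_atTop 0] with w hw
    have hpos := natCast_add_add_one_pos hμ m
    have hG := besselSeries_pos hμ hw.le
    have hnext := besselTerm_le_besselSeries hμ hw.le (m + 1)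
    rw [besselTerm_succ hμ] at hnext
    rw [div_le_div_iff₀ hG hw]
    rw [div_le_iff₀ (by positivity)] at hnext
    nlinarith

lemma tendsto_tsum_mul_besselTerm_div_besselSeries_atTop {μ : ℝ} (hμ : -1 < μ) {c : ℕ → ℝ}
    (hc0 : ∀ m, 0 ≤ c m) (hc : Tendsto c atTop (𝓝 0)) :
    Tendsto (fun w ↦ (∑' m, c m * besselTerm μ w m) / besselSeries μ w) atTop (𝓝 0) := by
  refine tendsto_order.2 ⟨fun a ha ↦ ?_, fun ε hε ↦ ?_⟩
  · filter_upwards [eventually_ge_atTop 0] with w hw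
    exact ha.trans_le <| div_nonneg
      (tsum_nonneg fun m ↦ mul_nonneg (hc0 m) (besselTerm_nonneg hμ hw m))
      (besselSeries_pos hμ hw).le
  obtain ⟨N, hN⟩ := eventually_atTop.1 (hc.eventually (gt_mem_nhds (half_pos hε)))
  have hhead : Tendsto (fun w ↦ ∑ m ∈ Finset.range N, c m * (besselTerm μ w m / besselSeries μ w))
      atTop (𝓝 0) := by
    simpa using tendsto_finsetSum _ fun m _ ↦
      (tendsto_besselTerm_div_besselSeries_atTop hμ m).const_mul (c m)
  filter_upwards [hhead.eventually (gt_mem_nhds (half_pos hε)), eventually_ge_atTop 0]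
    with w hhead_lt hw
  have hG := besselSeries_pos hμ hw
  have ht := summable_besselTerm μ w
  have hct : Summable fun m ↦ c m * besselTerm μ w m :=
    .of_norm_bounded_eventually_nat (ht.mul_left (ε / 2)) <| by
      filter_upwards [eventually_ge_atTop N] with m hm
      rw [Real.norm_of_nonneg (mul_nonneg (hc0 m) (besselTerm_nonneg hμ hw m))]
      exact mul_le_mul_of_nonneg_right (hN m hm).le (besselTerm_nonneg hμ hw m)
  have htail : ∑' m, c (m + N) * besselTerm μ w (m + N) ≤ ε / 2 * besselSeries μ w := calc
    _ ≤ ∑' m, ε / 2 * besselTerm μ w (m + N) :=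
      ((summable_nat_add_iff N).2 hct).tsum_le_tsum
        (fun m ↦ mul_le_mul_of_nonneg_right (hN _ le_add_self).le (besselTerm_nonneg hμ hw _))
        (((summable_nat_add_iff N).2 ht).mul_left _)
    _ ≤ ε / 2 * besselSeries μ w := by
      rw [tsum_mul_left]
      refine mul_le_mul_of_nonneg_left ?_ (half_pos hε).le
      rw [besselSeries, ← ht.sum_add_tsum_nat_add N]
      exact le_add_of_nonneg_left (Finset.sum_nonneg fun m _ ↦ besselTerm_nonneg hμ hw m)
  rw [← hct.sum_add_tsum_nat_add N, add_div, Finset.sum_div]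
  simp only [mul_div_assoc]
  linarith [(div_le_iff₀ hG).2 htail]

lemma tendsto_mul_besselSeries_add_two_div_atTop {ν : ℝ} (hν : -1 < ν) :
    Tendsto (fun w ↦ w * besselSeries (ν + 2) w / besselSeries ν w) atTop (𝓝 1) := by
  have hc : Tendsto (fun m : ℕ ↦ (ν + 1) / (m + ν + 1)) atTop (𝓝 0) :=
    tendsto_const_nhds.div_atTop <| tendsto_atTop_add_const_right _ _ <|
      tendsto_atTop_add_const_right _ _ tendsto_natCast_atTop_atTop
  have hc0 : ∀ m : ℕ, 0 ≤ (ν + 1) / (m + ν + 1) := fun m ↦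
    div_nonneg (by linarith) (natCast_add_add_one_pos hν m).le
  have := (tendsto_tsum_mul_besselTerm_div_besselSeries_atTop hν hc0 hc).const_sub 1
  rw [sub_zero] at this
  refine this.congr' ?_
  filter_upwards [eventually_ge_atTop 0] with w hw
  rw [← besselSeries_sub_mul_besselSeries_add_two hν hw, sub_div,
    div_self (besselSeries_pos hν hw).ne', sub_sub_cancel]

lemma tendsto_besselRatio_atTop {ν : ℝ} (hν : -1 < ν) : Tendsto (besselRatio ν) atTop (𝓝 1) := by
  have := (tendsto_mul_besselSeries_add_two_div_atTop hν).inv₀ one_ne_zero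
  simp only [inv_div, inv_one] at this
  exact this

lemma tendsto_besselRatio_nhdsGT_zero {ν : ℝ} (hν : -1 < ν) :
    Tendsto (besselRatio ν) (𝓝[>] 0) atTop := by
  have hν2 : -1 < ν + 2 := by linarith
  set C := besselSeries (ν + 2) 1
  have hC : 0 < C := besselSeries_pos hν2 zero_le_one
  have hΓ : 0 < (Real.Gamma (ν + 1))⁻¹ := inv_pos.2 (Real.Gamma_pos_of_pos (by linarith))
  refine tendsto_atTop_mono' _ ?_ (tendsto_inv_nhdsGT_zero.const_mul_atTop (div_pos hΓ hC))
  filter_upwards [Ioc_mem_nhdsGT zero_lt_one] with w ⟨hw0, hw1⟩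
  have hG0 : (Real.Gamma (ν + 1))⁻¹ ≤ besselSeries ν w := by
    simpa [besselTerm_zero] using besselTerm_le_besselSeries hν hw0.le 0
  have hG2 : w * besselSeries (ν + 2) w ≤ w * C :=
    mul_le_mul_of_nonneg_left (besselSeries_le_besselSeries hν2 hw0.le hw1) hw0.le
  calc (Real.Gamma (ν + 1))⁻¹ / C * w⁻¹ = (Real.Gamma (ν + 1))⁻¹ / (w * C) := by ring
    _ ≤ besselRatio ν w :=
      div_le_div₀ (besselSeries_pos hν hw0.le).le hG0
        (mul_pos hw0 (besselSeries_pos hν2 hw0.le)) hG2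

lemma besselF_ofReal (μ w : ℝ) : besselF μ w = besselSeries μ w := by
  rw [besselSeries, Complex.ofReal_tsum]
  refine tsum_congr fun m ↦ ?_
  rw [besselTerm, show (m : ℂ) + μ + 1 = ((m + μ + 1 : ℝ) : ℂ) by push_cast; ring,
    Complex.Gamma_ofReal]
  push_cast
  ring

lemma besselI_ofReal (μ : ℝ) {x : ℝ} (hx : 0 < x) :
    besselI μ x = ((x / 2) ^ μ * besselSeries μ (x ^ 2 / 4) : ℝ) := by
  rw [besselI, show (x : ℂ) ^ 2 / 4 = ((x ^ 2 / 4 : ℝ) : ℂ) by push_cast; ring, besselF_ofReal,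
    show (x : ℂ) / 2 = ((x / 2 : ℝ) : ℂ) by push_cast; ring,
    ← Complex.ofReal_cpow (by positivity), Complex.ofReal_mul]

lemma besselI_div_besselI_add_two (ν : ℝ) {x : ℝ} (hx : 0 < x) :
    besselI ν x / besselI (ν + 2) x = besselRatio ν (x ^ 2 / 4) := by
  rw [besselI_ofReal ν hx, besselI_ofReal (ν + 2) hx, ← Complex.ofReal_div, besselRatio,
    Real.rpow_add (by positivity), Real.rpow_two, mul_assoc,
    show (x / 2) ^ 2 = x ^ 2 / 4 by ring, mul_div_mul_left _ _ (by positivity)]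

lemma tendsto_mul_div_add_atTop (a : ℝ) : Tendsto (fun z ↦ a * z / (a + z)) atTop (𝓝 a) := by
  have : Tendsto (fun z ↦ a / (a / z + 1)) atTop (𝓝 (a / (0 + 1))) :=
    tendsto_const_nhds.div ((tendsto_const_nhds.div_atTop tendsto_id).add_const 1) (by norm_num)
  rw [zero_add, div_one] at this
  refine this.congr' ?_
  filter_upwards [eventually_gt_atTop 0, eventually_gt_atTop (-a)] with z hz hza
  have : a + z ≠ 0 := by linarith
  field_simp

lemma parallel_besselI_eq (ν R₀ Rinf : ℝ) {x : ℝ} (hx : 0 < x) :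
    (R₀ : ℂ) * ((Rinf : ℂ) * besselI ν x / besselI (ν + 2) x) /
        ((R₀ : ℂ) + (Rinf : ℂ) * besselI ν x / besselI (ν + 2) x) =
      ((R₀ * (Rinf * besselRatio ν (x ^ 2 / 4)) / (R₀ + Rinf * besselRatio ν (x ^ 2 / 4)) : ℝ) :
        ℂ) := by
  rw [mul_div_assoc (Rinf : ℂ), besselI_div_besselI_add_two ν hx]
  push_cast
  rfl

open Filter in
/-- Let `ν > -1`, `τ > 0`, `R₀ > 0`, `R_∞ > 0`. With
`Z_B(s) = R_∞ · I_ν(√(sτ))/I_{ν+2}(√(sτ))` and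
`Z(s) = R₀ Z_B(s)/(R₀ + Z_B(s))` for real `s > 0`, one has `Z(s) → R₀` as
`s → 0⁺` and `Z(s) → R₀R_∞/(R₀+R_∞)` as `s → +∞` along the positive reals. -/
theorem stmt16 (ν τ R₀ Rinf : ℝ) (hν : -1 < ν) (hτ : 0 < τ)
    (hR₀ : 0 < R₀) (hRinf : 0 < Rinf) :
    Tendsto (fun s : ℝ =>
        ((R₀ : ℂ) * ((Rinf : ℂ) * besselI ν ((Real.sqrt (s * τ) : ℝ) : ℂ) /
              besselI (ν + 2) ((Real.sqrt (s * τ) : ℝ) : ℂ))) /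
          ((R₀ : ℂ) + ((Rinf : ℂ) * besselI ν ((Real.sqrt (s * τ) : ℝ) : ℂ) /
              besselI (ν + 2) ((Real.sqrt (s * τ) : ℝ) : ℂ))))
      (nhdsWithin 0 (Set.Ioi 0)) (nhds ((R₀ : ℂ))) ∧
    Tendsto (fun s : ℝ =>
        ((R₀ : ℂ) * ((Rinf : ℂ) * besselI ν ((Real.sqrt (s * τ) : ℝ) : ℂ) /
              besselI (ν + 2) ((Real.sqrt (s * τ) : ℝ) : ℂ))) /
          ((R₀ : ℂ) + ((Rinf : ℂ) * besselI ν ((Real.sqrt (s * τ) : ℝ) : ℂ) /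
              besselI (ν + 2) ((Real.sqrt (s * τ) : ℝ) : ℂ))))
      atTop (nhds ((R₀ * Rinf / (R₀ + Rinf) : ℝ) : ℂ)) := by
  have hw0 : Tendsto (fun s ↦ s * τ / 4) (𝓝[>] 0) (𝓝[>] 0) := tendsto_nhdsWithin_iff.2
    ⟨((by fun_prop : Continuous fun s : ℝ ↦ s * τ / 4).tendsto' 0 0 (by simp)).mono_left
      nhdsWithin_le_nhds,
      eventually_nhdsWithin_of_forall fun s (hs : 0 < s) ↦ show 0 < s * τ / 4 by positivity⟩
  have hwTop : Tendsto (fun s ↦ s * τ / 4) atTop atTop :=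
    (tendsto_id.atTop_mul_const hτ).atTop_div_const four_pos
  have hsτ : ∀ s, 0 < s → 0 < s * τ := fun s hs ↦ mul_pos hs hτ
  constructor
  · have hZB := ((tendsto_besselRatio_nhdsGT_zero hν).comp hw0).const_mul_atTop hRinf
    refine ((tendsto_mul_div_add_atTop R₀).comp hZB).ofReal.congr' ?_
    filter_upwards [self_mem_nhdsWithin] with s (hs : 0 < s)
    rw [parallel_besselI_eq ν R₀ Rinf (Real.sqrt_pos.2 (hsτ s hs)), Real.sq_sqrt (hsτ s hs).le]
    rfl
  · have hZB := ((tendsto_besselRatio_atTop hν).comp hwTop).const_mul Rinf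
    rw [mul_one] at hZB
    refine (((tendsto_const_nhds (x := R₀)).mul hZB).div (tendsto_const_nhds.add hZB)
      (by positivity)).ofReal.congr' ?_
    filter_upwards [eventually_gt_atTop 0] with s hs
    rw [parallel_besselI_eq ν R₀ Rinf (Real.sqrt_pos.2 (hsτ s hs)), Real.sq_sqrt (hsτ s hs).le]
    rfl
end
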